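/- Suppose 0 → K → G →^γ U is an exact sequence of groups (K = ker γ) and there exist elements u₁, u₂ ∈ im(γ) that generate U. Then γ is surjective and 0 → K → G → U → 1 is a short exact sequence. Applied to abelian schemes: if the isometric automorphisms corresponding to (λ⁻¹)_* ∘ Φ^P and L ⊗ (-) generate U(X ×_T X̂) ≅ SL(2,ℤ), then γ_X : FM_T(D^b(X)) → U(X ×_T X̂) is surjective. -/

import Mathlib

theorem MonoidHom.surjective_of_closure_eq_top_of_subset_range {G U : Type*} [Group G] [Group U]
    (γ : G →* U) {s : Set U} (hs : Subgroup.closure s = ⊤) (hsγ : s ⊆ Set.range γ) :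
    Function.Surjective γ :=
  MonoidHom.range_eq_top.mp <| top_le_iff.mp <| hs ▸ (Subgroup.closure_le γ.range).mpr hsγ

/-- Suppose `0 → K → G →^γ U` is an exact sequence of groups (`K = ker γ`) and there exist
elements `u₁, u₂` in the image of `γ` that generate `U`.  Then `γ` is surjective, so that
`0 → K → G → U → 1` is a short exact sequence.  (Applied in the paper with
`G = FM_T(D^b(X))`, `U = U(X ×_T X̂) ≅ SL(2,ℤ)` and `u₁, u₂` the isometric automorphisms
associated to `(λ⁻¹)_* ∘ Φ^P` and `L ⊗ (-)`.) -/
theorem stmt_15 {G U : Type} [Group G] [Group U] (γ : G →* U) (K : Subgroup G)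
    (hK : γ.ker = K) (u₁ u₂ : U)
    (h₁ : u₁ ∈ Set.range γ) (h₂ : u₂ ∈ Set.range γ)
    (hgen : Subgroup.closure {u₁, u₂} = ⊤) :
    Function.Surjective γ ∧ γ.ker = K :=
  ⟨γ.surjective_of_closure_eq_top_of_subset_range hgen
    (Set.insert_subset h₁ (Set.singleton_subset_iff.mpr h₂)), hK⟩
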